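/- Let n ≥ 2 and let Σ = {±e_k ± e_l : 1 ≤ k < l ≤ n} ∪ {±e_k : 1 ≤ k ≤ n} ⊂ ℝ^n be the root system of type B_n with simple roots α_k = e_k − e_{k+1} (1 ≤ k ≤ n−1) and α_n = e_n. Let 1 ≤ i < n, let S = {α_k : 1 ≤ k ≤ n−1, k ≠ i}, and let p be the orthogonal projection of ℝ^n onto the orthogonal complement of the span of S. Write ᾱ_i = p(α_i) and ᾱ_n = p(α_n). Then ᾱ_i and ᾱ_n are linearly independent and the set of reduced restricted roots Σ_red(S) equals {±ᾱ_i, ±ᾱ_n, ±(ᾱ_i + ᾱ_n), ±(ᾱ_i + 2ᾱ_n)}. -/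

import Mathlib

/-!
Every difference `e_k - e_l` inside one of the blocks `{k ≤ i}`, `{k > i}` telescopes into
elements of `S`, while the means `f`, `g` of the basis vectors of the two blocks are orthogonal
to `S`; hence `p` sends `e_k` to `f` or to `g`, according to its block. Every root of `B_n` is
`± e_k ± e_l` or `± e_k`, so in the coordinates `(s, t) ↦ s f + t g` the restricted roots contain
all of `B₂ = {±f ± g, ±f, ±g}` (realised by `k = i`, `l = i + 1`) and lie in
`BC₂ = B₂ ∪ {±2f, ±2g}`. Halving keeps nothing of `B₂` inside `BC₂` and sends `±2f, ±2g` into `B₂`,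
so the reduced restricted roots are exactly `B₂`, with simple roots `ᾱ_i = f - g`, `ᾱ_n = g`.
-/

noncomputable section

/-- The `k`-th standard basis vector of `ℝ^N`. -/
def e {N : ℕ} (k : Fin N) : EuclideanSpace ℝ (Fin N) := EuclideanSpace.single k 1

/-- Orthogonal projection of `ℝ^N` onto the orthogonal complement of the span of `S`. -/
def projC {N : ℕ} (S : Set (EuclideanSpace ℝ (Fin N))) (v : EuclideanSpace ℝ (Fin N)) :
    EuclideanSpace ℝ (Fin N) :=
  (Submodule.orthogonalProjectionOnto ((Submodule.span ℝ S)ᗮ) v : EuclideanSpace ℝ (Fin N))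

/-- The set of restricted roots `Σ(S) = p(Σ) \ {0}`. -/
def restrictedRoots {N : ℕ} (Rts S : Set (EuclideanSpace ℝ (Fin N))) :
    Set (EuclideanSpace ℝ (Fin N)) :=
  (projC S '' Rts) \ {0}

/-- The set of reduced restricted roots: those `x ∈ Σ(S)` with `x/2 ∉ Σ(S)`. -/
def reducedRestrictedRoots {N : ℕ} (Rts S : Set (EuclideanSpace ℝ (Fin N))) :
    Set (EuclideanSpace ℝ (Fin N)) :=
  {x ∈ restrictedRoots Rts S | ¬ (1 / 2 : ℝ) • x ∈ restrictedRoots Rts S}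

/-- The root system of type `B_n` in `ℝ^n`: `±e_k ± e_l` (`k < l`) and `±e_k`. -/
def Broots (n : ℕ) : Set (EuclideanSpace ℝ (Fin n)) :=
  {v | ∃ k l : Fin n, k < l ∧
    (v = e k - e l ∨ v = e k + e l ∨ v = -e k + e l ∨ v = -e k - e l)} ∪
  {v | ∃ k : Fin n, v = e k ∨ v = -e k}

/-- The simple roots of `B_n`: `α_k = e_k − e_{k+1}` (`1 ≤ k ≤ n−1`) and `α_n = e_n`
(indexed here by `Fin n`). -/
def Bsimple (n : ℕ) (k : Fin n) : EuclideanSpace ℝ (Fin n) :=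
  if h : (k : ℕ) + 1 < n then e k - e ⟨(k : ℕ) + 1, h⟩ else e k


open Submodule Finset
open scoped InnerProductSpace

theorem sub_mem_of_forall_Ico {M σ : Type*} [AddGroup M] [SetLike σ M] [AddSubgroupClass σ M]
    {p : σ} (v : ℕ → M) {a b : ℕ} (hab : a ≤ b)
    (h : ∀ j, a ≤ j → j < b → v j - v (j + 1) ∈ p) : v a - v b ∈ p := by
  induction b, hab using Nat.le_induction with
  | base => simp
  | succ m hm ih =>
    rw [← sub_add_sub_cancel _ (v m)]
    exact add_mem (ih fun j hj hjm => h j hj (by omega)) (h m hm (by omega))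

theorem Submodule.sub_inv_card_smul_sum_mem {K M ι : Type*} [DivisionRing K] [CharZero K]
    [AddCommGroup M] [Module K M] (p : Submodule K M) {T : Finset ι} {v : ι → M} {k : ι}
    (hk : k ∈ T) (h : ∀ j ∈ T, v k - v j ∈ p) : v k - (#T : K)⁻¹ • ∑ j ∈ T, v j ∈ p := by
  have hT : (#T : K) ≠ 0 := Nat.cast_ne_zero.2 (card_ne_zero_of_mem hk)
  have hmean : v k - (#T : K)⁻¹ • ∑ j ∈ T, v j = (#T : K)⁻¹ • ∑ j ∈ T, (v k - v j) := by
    rw [sum_sub_distrib, sum_const, smul_sub, ← Nat.cast_smul_eq_nsmul K, inv_smul_smul₀ hT]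
  rw [hmean]
  exact p.smul_mem _ (p.sum_mem h)

section Projection

variable {N : ℕ}

theorem projC_eq_starProjection (S : Set (EuclideanSpace ℝ (Fin N))) :
    projC S = (span ℝ S)ᗮ.starProjection :=
  rfl

theorem projC_sub (S : Set (EuclideanSpace ℝ (Fin N))) (u v : EuclideanSpace ℝ (Fin N)) :
    projC S (u - v) = projC S u - projC S v := by
  simp only [projC_eq_starProjection, map_sub]

theorem projC_zsmul_add_zsmul (S : Set (EuclideanSpace ℝ (Fin N))) (s t : ℤ)
    (u v : EuclideanSpace ℝ (Fin N)) : projC S (s • u + t • v) = s • projC S u + t • projC S v := by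
  simp only [projC_eq_starProjection, map_add, map_zsmul]

theorem projC_eq_of_inner_eq_zero {S : Set (EuclideanSpace ℝ (Fin N))}
    {u v : EuclideanSpace ℝ (Fin N)} (hv : ∀ s ∈ S, ⟪s, v⟫_ℝ = 0) (huv : u - v ∈ span ℝ S) :
    projC S u = v := by
  have hv' : v ∈ (span ℝ S)ᗮ := by
    refine (isOrtho_span.2 ?_).le (subset_span (Set.mem_singleton v))
    rintro w rfl s hs
    rw [real_inner_comm]
    exact hv s hs
  exact eq_starProjection_of_mem_orthogonal hv' (le_orthogonal_orthogonal _ huv)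

theorem inner_e_left (k : Fin N) (v : EuclideanSpace ℝ (Fin N)) : ⟪e k, v⟫_ℝ = v k := by
  simp [e, EuclideanSpace.inner_single_left]

def blockMean (T : Finset (Fin N)) : EuclideanSpace ℝ (Fin N) := (#T : ℝ)⁻¹ • ∑ j ∈ T, e j

theorem blockMean_apply (T : Finset (Fin N)) (k : Fin N) :
    blockMean T k = if k ∈ T then (#T : ℝ)⁻¹ else 0 := by
  simp [blockMean, e]

theorem projC_e_eq_blockMean {S : Set (EuclideanSpace ℝ (Fin N))} {T : Finset (Fin N)}
    {k : Fin N} (hS : ∀ s ∈ S, ∃ j l, (j ∈ T ↔ l ∈ T) ∧ s = e j - e l) (hk : k ∈ T)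
    (hT : ∀ j ∈ T, e k - e j ∈ span ℝ S) : projC S (e k) = blockMean T := by
  refine projC_eq_of_inner_eq_zero ?_ ((span ℝ S).sub_inv_card_smul_sum_mem hk hT)
  intro s hs
  obtain ⟨j, l, hjl, rfl⟩ := hS s hs
  simp [inner_sub_left, inner_e_left, blockMean_apply, hjl]

theorem linearIndependent_blockMean_pair {T₁ T₂ : Finset (Fin N)} (h : Disjoint T₁ T₂)
    (h₁ : T₁.Nonempty) (h₂ : T₂.Nonempty) :
    LinearIndependent ℝ ![blockMean T₁, blockMean T₂] := by
  rw [LinearIndependent.pair_iff]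
  intro s t hst
  obtain ⟨j₁, hj₁⟩ := h₁
  obtain ⟨j₂, hj₂⟩ := h₂
  have h1 := congrArg (· j₁) hst
  have h2 := congrArg (· j₂) hst
  simp [blockMean_apply, hj₁, hj₂, disjoint_left.1 h hj₁, disjoint_right.1 h hj₂,
    ne_empty_of_mem hj₁, ne_empty_of_mem hj₂] at h1 h2
  exact ⟨h1, h2⟩

end Projection

section IntegerCombinations

variable {E : Type*} [AddCommGroup E]

def zcomb (f g : E) : ℤ × ℤ →+ E := (zmultiplesHom E f).coprod (zmultiplesHom E g)

@[simp]
theorem zcomb_apply (f g : E) (p : ℤ × ℤ) : zcomb f g p = p.1 • f + p.2 • g :=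
  rfl

theorem zcomb_injective [Module ℝ E] {f g : E} (h : LinearIndependent ℝ ![f, g]) :
    Function.Injective (zcomb f g) := by
  refine (injective_iff_map_eq_zero _).2 fun p hp => ?_
  obtain ⟨h₁, h₂⟩ :=
    LinearIndependent.pair_iff.1 h p.1 p.2 (by simpa [Int.cast_smul_eq_zsmul] using hp)
  exact Prod.ext (by exact_mod_cast h₁) (by exact_mod_cast h₂)

end IntegerCombinations

def rootsB2 : Set (ℤ × ℤ) := {p | p ≠ 0 ∧ |p.1| ≤ 1 ∧ |p.2| ≤ 1}

def rootsBC2 : Set (ℤ × ℤ) := {p | p ≠ 0 ∧ |p.1| + |p.2| ≤ 2}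

theorem rootsB2_eq :
    rootsB2 = {(1, -1), -(1, -1), (0, 1), -(0, 1), (1, -1) + (0, 1), -((1, -1) + (0, 1)),
      (1, -1) + 2 • (0, 1), -((1, -1) + 2 • (0, 1))} := by
  ext ⟨s, t⟩
  simp [rootsB2, Prod.ext_iff, abs_le]
  omega

theorem exists_mem_rootsB2_eq_two_nsmul {p : ℤ × ℤ} (hp : p ∈ rootsBC2) (hp' : p ∉ rootsB2) :
    ∃ q ∈ rootsB2, p = 2 • q := by
  obtain ⟨s, t⟩ := p
  refine ⟨(s / 2, t / 2), ?_, ?_⟩ <;>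
    simp [rootsB2, rootsBC2, Prod.ext_iff, Int.abs_eq_natAbs, -Nat.cast_natAbs] at * <;> omega

theorem two_nsmul_notMem_rootsB2 (q : ℤ × ℤ) : 2 • q ∉ rootsB2 := by
  simp [rootsB2, Prod.ext_iff, abs_le]
  omega

theorem reducedRestrictedRoots_eq_image_rootsB2 {N : ℕ} {Rts S : Set (EuclideanSpace ℝ (Fin N))}
    {f g : EuclideanSpace ℝ (Fin N)} (hfg : LinearIndependent ℝ ![f, g])
    (hB2 : zcomb f g '' rootsB2 ⊆ restrictedRoots Rts S)
    (hBC2 : restrictedRoots Rts S ⊆ zcomb f g '' rootsBC2) :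
    reducedRestrictedRoots Rts S = zcomb f g '' rootsB2 := by
  have half_eq_iff (p q : ℤ × ℤ) : (1 / 2 : ℝ) • zcomb f g p = zcomb f g q ↔ p = 2 • q := by
    rw [one_div, inv_smul_eq_iff₀ two_ne_zero, two_smul, ← two_nsmul, ← map_nsmul,
      (zcomb_injective hfg).eq_iff]
  ext x
  constructor
  · rintro ⟨hx, hhalf⟩
    obtain ⟨p, hp, rfl⟩ := hBC2 hx
    refine ⟨p, ?_, rfl⟩
    by_contra hp'
    obtain ⟨q, hq, rfl⟩ := exists_mem_rootsB2_eq_two_nsmul hp hp'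
    exact hhalf (((half_eq_iff _ q).2 rfl).symm ▸ hB2 ⟨q, hq, rfl⟩)
  · rintro ⟨p, hp, rfl⟩
    refine ⟨hB2 ⟨p, hp, rfl⟩, fun hhalf => ?_⟩
    obtain ⟨q, -, hq⟩ := hBC2 hhalf
    exact two_nsmul_notMem_rootsB2 q ((half_eq_iff p q).1 hq.symm ▸ hp)

section TypeB

variable {n : ℕ} {i : Fin n}

def blockSimpleRoots (n : ℕ) (i : Fin n) : Set (EuclideanSpace ℝ (Fin n)) :=
  {v | ∃ k : Fin n, k ≠ i ∧ (k : ℕ) + 1 < n ∧ v = Bsimple n k}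

theorem exists_eq_e_sub_e_of_mem_blockSimpleRoots {s : EuclideanSpace ℝ (Fin n)}
    (hs : s ∈ blockSimpleRoots n i) : ∃ j l : Fin n, (j ≤ i ↔ l ≤ i) ∧ s = e j - e l := by
  obtain ⟨k, hki, hk, rfl⟩ := hs
  refine ⟨k, ⟨k + 1, hk⟩, ?_, dif_pos hk⟩
  have : (k : ℕ) ≠ i := Fin.val_ne_of_ne hki
  rw [Fin.le_def, Fin.le_def]
  dsimp only
  omega

theorem e_sub_e_mem_span_blockSimpleRoots {k l : Fin n} (h : k ≤ i ↔ l ≤ i) :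
    e k - e l ∈ span ℝ (blockSimpleRoots n i) := by
  wlog hkl : k ≤ l generalizing k l
  · simpa using neg_mem (this h.symm (le_of_not_ge hkl))
  let v : ℕ → EuclideanSpace ℝ (Fin n) := fun j => if hj : j < n then e ⟨j, hj⟩ else 0
  have hv (m : Fin n) : v m = e m := dif_pos m.isLt
  rw [← hv k, ← hv l]
  have hln := l.isLt
  refine sub_mem_of_forall_Ico v hkl fun j hkj hjl => subset_span ⟨⟨j, by omega⟩, ?_, ?_, ?_⟩
  · rw [ne_eq, Fin.ext_iff]
    rw [Fin.le_def, Fin.le_def] at h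
    dsimp only
    omega
  · dsimp only
    omega
  · simp [v, Bsimple, show j < n by omega, show j + 1 < n by omega]

theorem projC_blockSimpleRoots_e (k : Fin n) :
    projC (blockSimpleRoots n i) (e k) =
      zcomb (blockMean (Iic i)) (blockMean (Ioi i)) (if k ≤ i then (1, 0) else (0, 1)) := by
  split_ifs with hk
  · refine (projC_e_eq_blockMean (fun s hs => ?_) (mem_Iic.2 hk) fun j hj =>
      e_sub_e_mem_span_blockSimpleRoots (iff_of_true hk (mem_Iic.1 hj))).trans (by simp)
    obtain ⟨j, l, h, rfl⟩ := exists_eq_e_sub_e_of_mem_blockSimpleRoots hs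
    exact ⟨j, l, by simp only [mem_Iic, h], rfl⟩
  · refine (projC_e_eq_blockMean (fun s hs => ?_) (mem_Ioi.2 (not_le.1 hk)) fun j hj =>
      e_sub_e_mem_span_blockSimpleRoots (iff_of_false hk (mem_Ioi.1 hj).not_ge)).trans (by simp)
    obtain ⟨j, l, h, rfl⟩ := exists_eq_e_sub_e_of_mem_blockSimpleRoots hs
    exact ⟨j, l, by simp only [mem_Ioi, ← not_le, h], rfl⟩

theorem linearIndependent_blockMean_Iic_Ioi (hi : (i : ℕ) + 1 < n) :
    LinearIndependent ℝ ![blockMean (Iic i), blockMean (Ioi i)] :=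
  linearIndependent_blockMean_pair
    (disjoint_left.2 fun _ h₁ h₂ => (mem_Ioi.1 h₂).not_ge (mem_Iic.1 h₁)) ⟨i, mem_Iic.2 le_rfl⟩
    ⟨⟨i + 1, hi⟩, mem_Ioi.2 (Fin.lt_def.2 (Nat.lt_succ_self _))⟩

theorem exists_eq_zsmul_add_zsmul_of_mem_Broots {β : EuclideanSpace ℝ (Fin n)}
    (hβ : β ∈ Broots n) : ∃ (k l : Fin n) (s t : ℤ), |s| ≤ 1 ∧ |t| ≤ 1 ∧ β = s • e k + t • e l := by
  rcases hβ with ⟨k, l, -, rfl | rfl | rfl | rfl⟩ | ⟨k, rfl | rfl⟩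
  · exact ⟨k, l, 1, -1, by norm_num, by norm_num, by simp [sub_eq_add_neg]⟩
  · exact ⟨k, l, 1, 1, by norm_num, by norm_num, by simp⟩
  · exact ⟨k, l, -1, 1, by norm_num, by norm_num, by simp⟩
  · exact ⟨k, l, -1, -1, by norm_num, by norm_num, by simp [sub_eq_add_neg]⟩
  · exact ⟨k, k, 1, 0, by norm_num, by norm_num, by simp⟩
  · exact ⟨k, k, -1, 0, by norm_num, by norm_num, by simp⟩

theorem zsmul_add_zsmul_mem_Broots {k l : Fin n} (hkl : k < l) {p : ℤ × ℤ} (hp : p ∈ rootsB2) :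
    p.1 • e k + p.2 • e l ∈ Broots n := by
  obtain ⟨s, t⟩ := p
  obtain ⟨hne, hs, ht⟩ := hp
  rw [ne_eq, Prod.mk_eq_zero, not_and_or] at hne
  rw [abs_le] at hs ht
  obtain rfl | hs₁ : s = 0 ∨ s = 1 ∨ s = -1 := by omega
  · obtain rfl | rfl : t = 1 ∨ t = -1 := by omega
    all_goals exact Or.inr ⟨l, by simp⟩
  obtain rfl | ht₁ : t = 0 ∨ t = 1 ∨ t = -1 := by omega
  · obtain rfl | rfl := hs₁
    all_goals exact Or.inr ⟨k, by simp⟩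
  refine Or.inl ⟨k, l, hkl, ?_⟩
  obtain rfl | rfl := hs₁ <;> obtain rfl | rfl := ht₁ <;> simp [sub_eq_add_neg]

theorem restrictedRoots_Broots_subset :
    restrictedRoots (Broots n) (blockSimpleRoots n i) ⊆
      zcomb (blockMean (Iic i)) (blockMean (Ioi i)) '' rootsBC2 := by
  rintro _ ⟨⟨β, hβ, rfl⟩, hne⟩
  obtain ⟨k, l, s, t, hs, ht, rfl⟩ := exists_eq_zsmul_add_zsmul_of_mem_Broots hβ
  rw [projC_zsmul_add_zsmul, projC_blockSimpleRoots_e, projC_blockSimpleRoots_e, ← map_zsmul,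
    ← map_zsmul, ← map_add] at hne ⊢
  refine ⟨_, ⟨fun h0 => hne (by rw [h0, map_zero]; rfl), ?_⟩, rfl⟩
  split_ifs <;> simp [Int.abs_eq_natAbs, -Nat.cast_natAbs] at hs ht ⊢ <;> omega

theorem image_rootsB2_subset_restrictedRoots (hi : (i : ℕ) + 1 < n) :
    zcomb (blockMean (Iic i)) (blockMean (Ioi i)) '' rootsB2 ⊆
      restrictedRoots (Broots n) (blockSimpleRoots n i) := by
  rintro _ ⟨p, hp, rfl⟩
  have hii : i < ⟨i + 1, hi⟩ := Fin.lt_def.2 (Nat.lt_succ_self _)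
  refine ⟨⟨_, zsmul_add_zsmul_mem_Broots hii hp, ?_⟩,
    (map_ne_zero_iff _ (zcomb_injective (linearIndependent_blockMean_Iic_Ioi hi))).2 hp.1⟩
  rw [projC_zsmul_add_zsmul, projC_blockSimpleRoots_e, projC_blockSimpleRoots_e, if_pos le_rfl,
    if_neg hii.not_ge, ← map_zsmul, ← map_zsmul, ← map_add]
  simp

end TypeB

/-- In type `B_n` (`n ≥ 2`), removing the simple roots `α_i`
(`1 ≤ i < n`) and `α_n`, the projections `ᾱ_i, ᾱ_n` onto the orthogonal complement of
the span of the remaining simple roots are linearly independent, and the set of reduced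
restricted roots is `{±ᾱ_i, ±ᾱ_n, ±(ᾱ_i + ᾱ_n), ±(ᾱ_i + 2ᾱ_n)}` (type `B_2`). -/
theorem statement7 (n : ℕ) (i : Fin n) (hi : (i : ℕ) + 1 < n)
    (S : Set (EuclideanSpace ℝ (Fin n)))
    (hS : S = {v | ∃ k : Fin n, k ≠ i ∧ (k : ℕ) + 1 < n ∧ v = Bsimple n k}) :
    LinearIndependent ℝ
      ![projC S (Bsimple n i), projC S (Bsimple n ⟨n - 1, by omega⟩)] ∧
    reducedRestrictedRoots (Broots n) S =
      {projC S (Bsimple n i), -projC S (Bsimple n i),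
       projC S (Bsimple n ⟨n - 1, by omega⟩), -projC S (Bsimple n ⟨n - 1, by omega⟩),
       projC S (Bsimple n i) + projC S (Bsimple n ⟨n - 1, by omega⟩),
       -(projC S (Bsimple n i) + projC S (Bsimple n ⟨n - 1, by omega⟩)),
       projC S (Bsimple n i) + (2 : ℝ) • projC S (Bsimple n ⟨n - 1, by omega⟩),
       -(projC S (Bsimple n i) + (2 : ℝ) • projC S (Bsimple n ⟨n - 1, by omega⟩))} := by
  obtain rfl : S = blockSimpleRoots n i := hS
  have hfg := linearIndependent_blockMean_Iic_Ioi hi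
  have hαi : projC (blockSimpleRoots n i) (Bsimple n i) =
      zcomb (blockMean (Iic i)) (blockMean (Ioi i)) (1, -1) := by
    rw [Bsimple, dif_pos hi, projC_sub, projC_blockSimpleRoots_e, projC_blockSimpleRoots_e,
      if_pos le_rfl, if_neg (by rw [Fin.le_def]; dsimp only; omega), ← map_sub]
    rfl
  have hαn (h : n - 1 < n) : projC (blockSimpleRoots n i) (Bsimple n ⟨n - 1, h⟩) =
      zcomb (blockMean (Iic i)) (blockMean (Ioi i)) (0, 1) := by
    rw [Bsimple, dif_neg (by dsimp only; omega), projC_blockSimpleRoots_e,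
      if_neg (by rw [Fin.le_def]; dsimp only; omega)]
  rw [hαi, hαn, reducedRestrictedRoots_eq_image_rootsB2 hfg
    (image_rootsB2_subset_restrictedRoots hi) restrictedRoots_Broots_subset, rootsB2_eq]
  have hαβ := (LinearIndependent.pair_add_smul_add_smul_iff (1 : ℤ) (-1) 0 1).2 ⟨hfg, by decide⟩
  refine ⟨by simpa using hαβ, ?_⟩
  simp only [Set.image_insert_eq, Set.image_singleton, map_neg, map_add, two_smul]

end
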